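/- arXiv:1810.01947 — 6 statements merged into one kernel-verified Lean document; each statement's English description precedes it below -/
import Mathlib

section
/- Let X be a set and 𝒜 a family of subsets of X. Then the following are equivalent: (i) for every finite partition of X there is a part S and some A ∈ 𝒜 with A ⊆ S; (ii) there exists an ultrafilter u on X such that every S ∈ u contains some A ∈ 𝒜 as a subset. -/
/-!
Call a set bad if it fails the (upward closed) property `p`. If every finite partition has a good
part, then no finitely many bad sets cover `X`: disjointing a cover gives a partition whose parts
are bad, being subsets of bad sets. So the complements of the bad sets have the finite intersection
property, and any ultrafilter containing them consists of good sets. Conversely, an ultrafilter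
contains a part of every finite partition.
-/

open Set Filter Function

namespace Ultrafilter

variable {X : Type*}

theorem exists_mem_of_iUnion_eq_univ {ι : Type*} [Finite ι] (u : Ultrafilter X)
    {P : ι → Set X} (hP : ⋃ i, P i = univ) : ∃ i, P i ∈ u :=
  u.eventually_exists_iff.1 <| .of_forall fun x => mem_iUnion.1 (hP ▸ mem_univ x)

section Partition

variable {p : Set X → Prop} (hp : Monotone p)
  (h : ∀ (n : ℕ) (P : Fin n → Set X), Pairwise (Disjoint on P) → ⋃ i, P i = univ → ∃ i, p (P i))
include hp h

theorem exists_of_iUnion_eq_univ_of_partition {ι : Type*} [Finite ι] (S : ι → Set X)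
    (hS : ⋃ i, S i = univ) : ∃ i, p (S i) := by
  obtain ⟨n, ⟨e⟩⟩ := Finite.exists_equiv_fin ι
  set S' := S ∘ e.symm
  have hS' : ⋃ k, S' k = univ := (e.symm.surjective.iUnion_comp S).trans hS
  obtain ⟨k, hk⟩ := h n (disjointed S') (disjoint_disjointed S') (iUnion_disjointed.trans hS')
  exact ⟨e.symm k, hp (disjointed_subset S' k) hk⟩

theorem exists_forall_of_partition : ∃ u : Ultrafilter X, ∀ S ∈ u, p S := by
  obtain ⟨u, hu⟩ := exists_ultrafilter_of_finite_inter_nonempty (compl '' {S | ¬p S}) <| by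
    intro T hT
    by_contra hempty
    have hcover : ⋃ t : (T : Set (Set X)), (t : Set X)ᶜ = univ := by
      rw [← compl_iInter, ← sInter_eq_iInter, not_nonempty_iff_eq_empty.1 hempty, compl_empty]
    obtain ⟨⟨t, htT⟩, ht⟩ := exists_of_iUnion_eq_univ_of_partition hp h _ hcover
    obtain ⟨B, hB, rfl⟩ := hT htT
    exact hB (compl_compl B ▸ ht)
  refine ⟨u, fun S hS => by_contra fun hpS => ?_⟩
  exact u.compl_notMem_iff.2 hS (hu ⟨S, hpS, rfl⟩)

end Partition

theorem forall_partition_exists_iff_exists_forall {p : Set X → Prop} (hp : Monotone p) :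
    (∀ (n : ℕ) (P : Fin n → Set X), Pairwise (Disjoint on P) → ⋃ i, P i = univ →
      ∃ i, p (P i)) ↔ ∃ u : Ultrafilter X, ∀ S ∈ u, p S := by
  refine ⟨exists_forall_of_partition hp, ?_⟩
  rintro ⟨u, hu⟩ n P - hP
  obtain ⟨i, hi⟩ := u.exists_mem_of_iUnion_eq_univ hP
  exact ⟨i, hu _ hi⟩

end Ultrafilter

/-- For a set `X` and a family `𝒜` of subsets of `X`, the following are
equivalent: (i) every finite partition of `X` has a part containing some
member of `𝒜`; (ii) there is an ultrafilter `u` on `X` such that every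
`S ∈ u` contains some member of `𝒜`. -/
theorem stmt_0 (X : Type) (𝒜 : Set (Set X)) :
    (∀ (n : ℕ) (P : Fin n → Set X),
        (Pairwise fun i j => Disjoint (P i) (P j)) → (⋃ i, P i) = Set.univ →
        ∃ i, ∃ A ∈ 𝒜, A ⊆ P i) ↔
      ∃ u : Ultrafilter X, ∀ S ∈ u, ∃ A ∈ 𝒜, A ⊆ S :=
  Ultrafilter.forall_partition_exists_iff_exists_forall (p := fun S => ∃ A ∈ 𝒜, A ⊆ S)
    fun _ _ hST ⟨A, hA, hAS⟩ => ⟨A, hA, hAS.trans hST⟩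
end

section
/- (Hindman's Finite Sums Theorem) For every finite coloring of the positive natural numbers there exist a color class A and an injective infinite sequence x₀, x₁, … of positive naturals such that every finite sum Σ_{i∈F} xᵢ over a nonempty finite set F of indices belongs to A. -/
/-!
Mathlib's Hindman theorem (`Hindman.FS_partition_regular`), applied to the finite sums of the
constant stream `1` covered by the colour classes intersected with the positive integers, yields a
stream `b` of positive integers all of whose finite sums have one colour. To make the sequence
injective, cut `b` into consecutive blocks, each longer than the sum of all terms before it: the
block sums then strictly increase, and a finite sum of block sums is a finite sum of `b`.
-/

open Finset

namespace Hindman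

theorem FS_subset_of_add_mem {M : Type*} [AddSemigroup M] {s : Set M}
    (hs : ∀ x ∈ s, ∀ y ∈ s, x + y ∈ s) {a : Stream' M} (ha : ∀ i, a.get i ∈ s) :
    FS a ⊆ s := by
  intro m hm
  induction hm with
  | head' a => exact ha 0
  | tail' a m _ ih => exact ih fun i => ha (i + 1)
  | cons' a m _ ih => exact hs _ (ha 0) _ (ih fun i => ha (i + 1))

theorem sum_sum_Ico_eq_sum_biUnion {M : Type*} [AddCommMonoid M] {t : ℕ → ℕ} (ht : Monotone t)
    (f : ℕ → M) (F : Finset ℕ) :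
    ∑ n ∈ F, ∑ j ∈ Ico (t n) (t (n + 1)), f j =
      ∑ j ∈ F.biUnion fun n => Ico (t n) (t (n + 1)), f j := by
  refine (sum_biUnion fun m _ n _ hmn => ?_).symm
  rw [Function.onFun, ← disjoint_coe, coe_Ico, coe_Ico]
  exact ht.pairwise_disjoint_on_Ico_succ hmn

def blockStart (b : Stream' ℕ) : ℕ → ℕ
  | 0 => 0
  | n + 1 => blockStart b n + ∑ j ∈ range (blockStart b n), b.get j + 1

def blockSum (b : Stream' ℕ) (n : ℕ) : ℕ :=
  ∑ j ∈ Ico (blockStart b n) (blockStart b (n + 1)), b.get j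

theorem blockStart_strictMono (b : Stream' ℕ) : StrictMono (blockStart b) :=
  strictMono_nat_of_lt_succ fun n => by simp only [blockStart]; omega

theorem blockSum_strictMono {b : Stream' ℕ} (hb : ∀ j, 0 < b.get j) : StrictMono (blockSum b) := by
  refine strictMono_nat_of_lt_succ fun n => ?_
  set t := blockStart b
  calc blockSum b n ≤ ∑ j ∈ range (t (n + 1)), b.get j :=
        sum_le_sum_of_subset (fun j hj => mem_range.2 (mem_Ico.1 hj).2)
    _ < t (n + 2) - t (n + 1) := by simp only [t, blockStart]; omega
    _ = #(Ico (t (n + 1)) (t (n + 2))) • 1 := by simp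
    _ ≤ blockSum b (n + 1) := card_nsmul_le_sum _ _ _ fun j _ => hb j

theorem sum_blockSum_mem_FS (b : Stream' ℕ) {F : Finset ℕ} (hF : F.Nonempty) :
    ∑ n ∈ F, blockSum b n ∈ FS b := by
  unfold blockSum
  rw [sum_sum_Ico_eq_sum_biUnion (blockStart_strictMono b).monotone]
  refine FS.finsetSum b _ ?_
  obtain ⟨n, hn⟩ := hF
  exact ⟨blockStart b n,
    mem_biUnion.2 ⟨n, hn, left_mem_Ico.2 (blockStart_strictMono b n.lt_succ_self)⟩⟩

end Hindman

open Hindman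

/-- Hindman's Finite Sums Theorem: for every finite coloring of the positive
natural numbers there are a color `i` and an injective infinite sequence of
positive naturals all of whose finite nonempty subset sums have color `i`. -/
theorem stmt_4 (k : ℕ) (c : ℕ → Fin k) :
    ∃ (i : Fin k) (x : ℕ → ℕ), (∀ j, 0 < x j) ∧ Function.Injective x ∧
      ∀ F : Finset ℕ, F.Nonempty → c (∑ j ∈ F, x j) = i := by
  have hpos : FS (Stream'.const 1) ⊆ {n | 0 < n} :=
    FS_subset_of_add_mem (fun _ hx _ _ => Nat.add_pos_left hx _) fun _ => Nat.one_pos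
  have hcover : FS (Stream'.const 1) ⊆ ⋃₀ Set.range fun i => {n | c n = i} ∩ {n | 0 < n} :=
    fun n hn => Set.mem_sUnion.2 ⟨_, ⟨c n, rfl⟩, rfl, hpos hn⟩
  obtain ⟨_, ⟨i, rfl⟩, b, hb⟩ := FS_partition_regular _ _ (Set.finite_range _) hcover
  have hb_pos : ∀ j, 0 < b.get j := fun j => (hb (FS.singleton b j)).2
  refine ⟨i, blockSum b, fun n => ?_, (blockSum_strictMono hb_pos).injective,
    fun F hF => (hb (sum_blockSum_mem_FS b hF)).1⟩
  simpa only [sum_singleton, Set.mem_ofPred_eq] using (hb (sum_blockSum_mem_FS b (singleton_nonempty n))).2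
end

section
/- If (X, ·) is an infinite semigroup that is weakly left cancellative, then (βX, ·) has a free (non-principal) idempotent ultrafilter. -/
/-!
Weak left cancellativity says exactly that every left translation `y ↦ x * y` tends to the
cofinite filter along the cofinite filter. Hence `U * V` is free as soon as `V` is, so the free
ultrafilters form a closed subsemigroup of the compact Hausdorff semigroup `βX` (whose
multiplication is continuous in its left argument), nonempty because `X` is infinite. The
Ellis–Numakura lemma then yields an idempotent in it.
-/

open Filter

/-- The ultrafilter extension of the semigroup operation:
`A ∈ umul u v ↔ {x : {y : x·y ∈ A} ∈ v} ∈ u`. -/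
def umul {X : Type} [Mul X] (u v : Ultrafilter X) : Ultrafilter X :=
  u.bind fun x => v.map fun y => x * y

attribute [local instance] Ultrafilter.mul Ultrafilter.semigroup

lemma umul_eq_mul {X : Type} [Mul X] (u v : Ultrafilter X) : umul u v = u * v :=
  Ultrafilter.coe_inj.mp <| Filter.ext fun _ => Iff.rfl

namespace Ultrafilter

lemma isClosed_setOf_coe_le {α : Type*} (f : Filter α) :
    IsClosed {u : Ultrafilter α | (u : Filter α) ≤ f} := by
  have : {u : Ultrafilter α | (u : Filter α) ≤ f} = ⋂ s ∈ f, {u | s ∈ u} := by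
    ext u
    simp only [Set.mem_ofPred_eq, Set.mem_iInter]
    rfl
  rw [this]
  exact isClosed_biInter fun s _ => ultrafilter_isClosed_basic s

lemma coe_mul_le_cofinite {M : Type*} [Mul M]
    (htend : ∀ x : M, Tendsto (x * ·) cofinite cofinite) (U : Ultrafilter M)
    {V : Ultrafilter M} (hV : (V : Filter M) ≤ cofinite) :
    (↑(U * V) : Filter M) ≤ cofinite := fun _ hs =>
  (Ultrafilter.eventually_mul U V _).mpr <| Eventually.of_forall fun x => hV (htend x hs)

lemma ne_pure_of_le_cofinite {α : Type*} {u : Ultrafilter α} (hu : (u : Filter α) ≤ cofinite)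
    (a : α) : u ≠ pure a := by
  rintro rfl
  exact hu (Set.finite_singleton a).compl_mem_cofinite rfl

lemma exists_idempotent_le_cofinite {M : Type*} [Semigroup M] [Infinite M]
    (htend : ∀ x : M, Tendsto (x * ·) cofinite cofinite) :
    ∃ U : Ultrafilter M, U * U = U ∧ (U : Filter M) ≤ cofinite := by
  obtain ⟨U, hU, hidem⟩ := exists_idempotent_in_compact_subsemigroup continuous_mul_left
    {U : Ultrafilter M | (U : Filter M) ≤ cofinite} ⟨hyperfilter M, hyperfilter_le_cofinite⟩
    (isClosed_setOf_coe_le _).isCompact fun U _ _ hV => coe_mul_le_cofinite htend U hV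
  exact ⟨U, hidem, hU⟩

end Ultrafilter

/-- If `X` is an infinite weakly left cancellative semigroup (each equation
`a·x = b` has only finitely many solutions), then `βX` has a free
(non-principal) idempotent ultrafilter. -/
theorem stmt_7 (X : Type) [Semigroup X] [Infinite X]
    (hwlc : ∀ a b : X, {x : X | a * x = b}.Finite) :
    ∃ u : Ultrafilter X, umul u u = u ∧ ∀ x : X, u ≠ pure x := by
  have htend (a : X) : Tendsto (a * ·) cofinite cofinite :=
    Tendsto.cofinite_of_finite_preimage_singleton fun b => (hwlc a b).to_subtype
  obtain ⟨u, hidem, hfree⟩ := Ultrafilter.exists_idempotent_le_cofinite htend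
  exact ⟨u, (umul_eq_mul u u).trans hidem, Ultrafilter.ne_pure_of_le_cofinite hfree⟩
end

section
/- (Galvin's observation) Let (X, ·) be a semigroup and u a free idempotent ultrafilter in (βX, ·). Then for every S ∈ u there is an injective sequence (xᵢ)_{i<ω} of elements of S such that every finite product x_{i₀}·x_{i₁}·…·x_{iₙ} with i₀ < i₁ < … < iₙ belongs to S. -/
/-- The product `a * b₁ * ⋯ * bₖ` of a nonempty list of semigroup elements. -/
def listProd {X : Type} [Mul X] : X → List X → X
  | a, [] => a
  | a, b :: l => listProd (a * b) l

open Filter Set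

theorem mem_umul_iff {X : Type} [Mul X] {u v : Ultrafilter X} {A : Set X} :
    A ∈ umul u v ↔ {x | {y | x * y ∈ A} ∈ v} ∈ u := by
  change A ∈ Filter.bind (↑u) (fun x => ↑(Ultrafilter.map (fun y => x * y) v)) ↔ _
  rw [Filter.mem_bind']
  rfl

theorem listProd_mul {X : Type} [Semigroup X] (l : List X) (a b : X) :
    listProd (a * b) l = a * listProd b l := by
  induction l generalizing b with
  | nil => rfl
  | cons c l ih => exact (congrArg (listProd · l) (mul_assoc a b c)).trans (ih (b * c))

section Star

variable {X : Type} {u : Ultrafilter X} {A : Set X}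

def starSet [Mul X] (u : Ultrafilter X) (A : Set X) : Set X :=
  A ∩ {a | {y | a * y ∈ A} ∈ u}

theorem starSet_subset [Mul X] (A : Set X) : starSet u A ⊆ A :=
  inter_subset_left

theorem setOf_preimage_mul_mem_of_umul_self [Mul X] (hidem : umul u u = u) (hA : A ∈ u) :
    {a | {y | a * y ∈ A} ∈ u} ∈ u :=
  mem_umul_iff.mp (hidem.symm ▸ hA)

theorem starSet_mem [Mul X] (hidem : umul u u = u) (hA : A ∈ u) : starSet u A ∈ u :=
  inter_mem hA (setOf_preimage_mul_mem_of_umul_self hidem hA)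

theorem preimage_mul_starSet_mem [Semigroup X] (hidem : umul u u = u) {a : X}
    (ha : a ∈ starSet u A) : {y | a * y ∈ starSet u A} ∈ u := by
  have h : {y | {z | a * y * z ∈ A} ∈ u} ∈ u := by
    simpa only [mem_ofPred_eq, mul_assoc] using setOf_preimage_mul_mem_of_umul_self hidem ha.2
  exact inter_mem ha.2 h

end Star

theorem compl_singleton_mem_of_ne_pure {X : Type} {u : Ultrafilter X}
    (hfree : ∀ x : X, u ≠ pure x) (a : X) : {a}ᶜ ∈ u := by
  refine Ultrafilter.compl_mem_iff_notMem.mpr fun ha => ?_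
  obtain ⟨b, -, rfl⟩ := Ultrafilter.eq_pure_of_finite_mem (finite_singleton a) ha
  exact hfree b rfl

section Construction

variable {X : Type} [Nonempty X] {u : Ultrafilter X} {S : Set X}

section Mul

variable [Mul X]

noncomputable def galvinSet (u : Ultrafilter X) (S : Set X) : ℕ → Set X
  | 0 => starSet u S
  | n + 1 =>
    let a := Classical.epsilon (· ∈ galvinSet u S n)
    starSet u ((galvinSet u S n ∩ {y | a * y ∈ galvinSet u S n}) \ {a})

-- `Classical.epsilon` returns an arbitrary point of `X` when the set is empty, so
-- `galvinSeq u S n ∈ galvinSet u S n` only once `galvinSet u S n ∈ u` is known.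
noncomputable def galvinSeq (u : Ultrafilter X) (S : Set X) (n : ℕ) : X :=
  Classical.epsilon (· ∈ galvinSet u S n)

theorem galvinSet_succ (n : ℕ) :
    galvinSet u S (n + 1) = starSet u ((galvinSet u S n ∩
      {y | galvinSeq u S n * y ∈ galvinSet u S n}) \ {galvinSeq u S n}) :=
  rfl

theorem galvinSet_succ_subset (n : ℕ) : galvinSet u S (n + 1) ⊆ galvinSet u S n :=
  (starSet_subset _).trans (sdiff_subset.trans inter_subset_left)

theorem galvinSet_antitone : Antitone (galvinSet u S) :=
  antitone_nat_of_succ_le galvinSet_succ_subset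

theorem galvinSet_subset (n : ℕ) : galvinSet u S n ⊆ S :=
  (galvinSet_antitone n.zero_le).trans (starSet_subset S)

theorem galvinSeq_mul_mem {n : ℕ} {y : X} (hy : y ∈ galvinSet u S (n + 1)) :
    galvinSeq u S n * y ∈ galvinSet u S n :=
  (starSet_subset _ hy).1.2

theorem galvinSeq_notMem_galvinSet_succ (n : ℕ) : galvinSeq u S n ∉ galvinSet u S (n + 1) :=
  fun h => (starSet_subset _ h).2 rfl

theorem galvinSeq_mem_of_mem {n : ℕ} (h : galvinSet u S n ∈ u) :
    galvinSeq u S n ∈ galvinSet u S n :=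
  Classical.epsilon_spec (Ultrafilter.nonempty_of_mem h)

theorem galvinSeq_ne_of_lt {m n : ℕ} (hmn : m < n) (hn : galvinSet u S n ∈ u) :
    galvinSeq u S m ≠ galvinSeq u S n := fun h =>
  galvinSeq_notMem_galvinSet_succ m (h ▸ galvinSet_antitone hmn (galvinSeq_mem_of_mem hn))

end Mul

variable [Semigroup X]

theorem preimage_mul_galvinSet_mem (hidem : umul u u = u) {n : ℕ} {a : X}
    (ha : a ∈ galvinSet u S n) : {y | a * y ∈ galvinSet u S n} ∈ u := by
  cases n <;> exact preimage_mul_starSet_mem hidem ha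

theorem galvinSet_mem (hidem : umul u u = u) (hfree : ∀ x : X, u ≠ pure x) (hS : S ∈ u)
    (n : ℕ) : galvinSet u S n ∈ u := by
  induction n with
  | zero => exact starSet_mem hidem hS
  | succ n ih =>
    have hpre := preimage_mul_galvinSet_mem hidem (galvinSeq_mem_of_mem ih)
    rw [galvinSet_succ]
    exact starSet_mem hidem (sdiff_mem (inter_mem ih hpre) (compl_singleton_mem_of_ne_pure hfree _))

theorem listProd_galvinSeq_mem {i : ℕ} {l : List ℕ} (hmem : ∀ n, galvinSet u S n ∈ u)
    (hl : (i :: l).IsChain (· < ·)) :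
    listProd (galvinSeq u S i) (l.map (galvinSeq u S)) ∈ galvinSet u S i := by
  induction l generalizing i with
  | nil => exact galvinSeq_mem_of_mem (hmem i)
  | cons j l ih =>
    obtain ⟨hij, hl⟩ := List.isChain_cons_cons.mp hl
    rw [List.map_cons, listProd, listProd_mul]
    exact galvinSeq_mul_mem (galvinSet_antitone hij (ih hl))

end Construction

/-- Galvin's observation: if `u` is a free idempotent ultrafilter on a
semigroup `X`, then every `S ∈ u` contains all finite products, along
increasing index tuples, of some injective sequence of elements of `S`. -/
theorem stmt_8 (X : Type) [Semigroup X] (u : Ultrafilter X)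
    (hfree : ∀ x : X, u ≠ pure x) (hidem : umul u u = u)
    (S : Set X) (hS : S ∈ u) :
    ∃ x : ℕ → X, Function.Injective x ∧ (∀ i, x i ∈ S) ∧
      ∀ (i : ℕ) (l : List ℕ), (i :: l).Chain' (· < ·) →
        listProd (x i) (l.map x) ∈ S := by
  have : Nonempty X := ⟨(u.nonempty_of_mem hS).some⟩
  have hmem := galvinSet_mem hidem hfree hS
  have hprod (i : ℕ) (l : List ℕ) (hl : (i :: l).IsChain (· < ·)) :
      listProd (galvinSeq u S i) (l.map (galvinSeq u S)) ∈ S :=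
    galvinSet_subset i (listProd_galvinSeq_mem hmem hl)
  refine ⟨galvinSeq u S, ?_, fun i => hprod i [] (List.isChain_singleton i), hprod⟩
  exact Function.Injective.of_lt_imp_ne fun m n hmn => galvinSeq_ne_of_lt hmn (hmem n)
end

section
/- Let K be a polyring and F a term in variables x₁,…,xₙ of nonzero degree d. Then there exists a term G in variables x₁,…,xₙ,y₁,…,yₙ, of degree less than d with respect to x₁,…,xₙ, such that F(x⃗ + y⃗) = F(x⃗) + F(y⃗) + G(x⃗, y⃗) holds for all values in K. -/
/-- Terms over a polyring signature: variables, constants from `K` (including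
`0`), addition, and extra operations indexed by `ι` with arities `ar`. -/
inductive PTerm (K ι : Type) (ar : ι → ℕ) (n : ℕ) : Type
  | var : Fin n → PTerm K ι ar n
  | const : K → PTerm K ι ar n
  | add : PTerm K ι ar n → PTerm K ι ar n → PTerm K ι ar n
  | op (i : ι) : (Fin (ar i) → PTerm K ι ar n) → PTerm K ι ar n

variable {K ι : Type} {ar : ι → ℕ} {n : ℕ}

/-- Evaluation of a term at a point of `Kⁿ`. -/
def PTerm.eval [AddCommGroup K] (ops : ∀ i, (Fin (ar i) → K) → K) :
    PTerm K ι ar n → (Fin n → K) → K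
  | .var j, a => a j
  | .const c, _ => c
  | .add s t, a => s.eval ops a + t.eval ops a
  | .op i ts, a => ops i fun j => (ts j).eval ops a

/-- A monomial is a term not containing `+`. -/
def PTerm.IsMonomial : PTerm K ι ar n → Prop
  | .var _ => True
  | .const _ => True
  | .add _ _ => False
  | .op _ ts => ∀ j, (ts j).IsMonomial

/-- A polynomial is a finite sum of monomials. -/
def PTerm.IsPolynomial : PTerm K ι ar n → Prop
  | .add s t => s.IsPolynomial ∧ t.IsPolynomial
  | t => t.IsMonomial

/-- Degree bookkeeping: the number of occurrences of variables from `V` in a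
monomial, extended to sums by taking the maximum of the summands (so on
polynomials this computes the degree w.r.t. `V`). -/
def PTerm.occ : PTerm K ι ar n → Finset (Fin n) → ℕ
  | .var j, V => if j ∈ V then 1 else 0
  | .const _, _ => 0
  | .add s t, V => max (s.occ V) (t.occ V)
  | .op _ ts, V => ∑ j, (ts j).occ V

/-- The degree of a term w.r.t. a set `V` of variables: the minimal degree
w.r.t. `V` of a polynomial representing (inducing the same function as) it. -/
noncomputable def PTerm.degree [AddCommGroup K] (ops : ∀ i, (Fin (ar i) → K) → K)
    (F : PTerm K ι ar n) (V : Finset (Fin n)) : ℕ :=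
  sInf {d | ∃ P : PTerm K ι ar n, P.IsPolynomial ∧
    (∀ a, P.eval ops a = F.eval ops a) ∧ P.occ V ≤ d}

/-- The polyring condition: each extra operation is distributive w.r.t. `+`,
i.e. additive in every argument. -/
def IsPolyring [AddCommGroup K] (ops : ∀ i, (Fin (ar i) → K) → K) : Prop :=
  ∀ (i : ι) (j : Fin (ar i)) (a : Fin (ar i) → K) (x y : K),
    ops i (Function.update a j (x + y)) =
      ops i (Function.update a j x) + ops i (Function.update a j y)

/-- The Zariski topology on `Kⁿ`: root sets of terms form a closed subbase,
so the closed sets are the intersections of finite unions of root sets. -/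
def zariskiTopology [AddCommGroup K] (ops : ∀ i, (Fin (ar i) → K) → K) (n : ℕ) :
    TopologicalSpace (Fin n → K) :=
  TopologicalSpace.generateFrom
    {U | ∃ F : PTerm K ι ar n, U = {a | F.eval ops a = 0}ᶜ}

/-!
Represent `F` by a polynomial `P` of degree `d`. For a monomial `op i ts`, each argument satisfies
`ts j (x + y) = ts j x + ∑ s, g j s (x, y)` with monomials `g j s` of lower degree in `x`
(by induction), so additivity of `ops i` in each argument expands `op i ts (x + y)` into a sum
over one choice of summand per argument. The all-`x` choice is `op i ts x`, one choice evaluates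
to `op i ts y`, and every other choice has lower degree in `x`. Dropping these two summands, and
summing over the monomials of `P` (a constant monomial `M` contributes the constant `-M 0`),
gives `G`.
-/

section Polyring

variable [AddCommGroup K] {ops : ∀ i, (Fin (ar i) → K) → K}

def IsPolyring.toMultilinearMap (hpoly : IsPolyring ops) (i : ι) :
    MultilinearMap ℕ (fun _ : Fin (ar i) => K) K :=
  MultilinearMap.mk' (ops i) (fun a j => hpoly i j a) fun a j c x =>
    map_nsmul (AddMonoidHom.mk' (fun x => ops i (Function.update a j x)) (hpoly i j a)) c x

theorem IsPolyring.map_sum (hpoly : IsPolyring ops) (i : ι) {σ : Fin (ar i) → Type}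
    [∀ j, Fintype (σ j)] (c : ∀ j, σ j → K) :
    ops i (fun j => ∑ s, c j s) = ∑ r : ∀ j, σ j, ops i fun j => c j (r j) :=
  (hpoly.toMultilinearMap i).map_sum c

end Polyring

namespace PTerm

open Finset

def rename {m : ℕ} (f : Fin n → Fin m) : PTerm K ι ar n → PTerm K ι ar m
  | .var j => .var (f j)
  | .const c => .const c
  | .add s t => .add (s.rename f) (t.rename f)
  | .op i ts => .op i fun j => (ts j).rename f

def listSum [Zero K] : List (PTerm K ι ar n) → PTerm K ι ar n
  | [] => .const 0
  | t :: ts => .add t (listSum ts)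

theorem IsMonomial.isPolynomial {t : PTerm K ι ar n} (h : t.IsMonomial) : t.IsPolynomial := by
  cases t with
  | add s t => exact h.elim
  | _ => exact h

theorem IsMonomial.rename {m : ℕ} (f : Fin n → Fin m) {t : PTerm K ι ar n}
    (h : t.IsMonomial) : (t.rename f).IsMonomial := by
  induction t with
  | var j => trivial
  | const c => trivial
  | add s t => exact h.elim
  | op i ts ih => exact fun j => ih j (h j)

theorem occ_rename {m : ℕ} (f : Fin n → Fin m) (t : PTerm K ι ar n) (V : Finset (Fin m)) :
    (t.rename f).occ V = t.occ {j | f j ∈ V} := by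
  induction t with
  | var j => simp [rename, occ]
  | const c => rfl
  | add s t ihs iht => simp [rename, occ, ihs, iht]
  | op i ts ih => simp [rename, occ, ih]

theorem occ_empty (t : PTerm K ι ar n) : t.occ ∅ = 0 := by
  induction t with
  | var j => simp [occ]
  | const c => rfl
  | add s t ihs iht => simp [occ, ihs, iht]
  | op i ts ih => simp [occ, ih]

theorem occ_rename_castAdd (t : PTerm K ι ar n) :
    (t.rename (Fin.castAdd n)).occ (univ.image (Fin.castAdd n)) = t.occ univ := by
  rw [occ_rename]
  congr
  ext j
  simp

theorem occ_rename_natAdd (t : PTerm K ι ar n) :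
    (t.rename (Fin.natAdd n)).occ (univ.image (Fin.castAdd n)) = 0 := by
  rw [occ_rename, ← occ_empty t]
  congr
  ext j
  simp only [mem_filter, mem_univ, true_and, mem_image, Fin.ext_iff, Fin.val_castAdd,
    Fin.val_natAdd, notMem_empty, iff_false, not_exists]
  omega

theorem occ_listSum_lt [Zero K] {l : List (PTerm K ι ar n)} {V : Finset (Fin n)} {d : ℕ}
    (hd : 0 < d) (h : ∀ t ∈ l, t.occ V < d) : (listSum l).occ V < d := by
  induction l with
  | nil => exact hd
  | cons t ts ih =>
    exact max_lt (h t List.mem_cons_self) (ih fun u hu => h u (List.mem_cons_of_mem _ hu))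

theorem isPolynomial_listSum [Zero K] {l : List (PTerm K ι ar n)} (h : ∀ t ∈ l, t.IsMonomial) :
    (listSum l).IsPolynomial := by
  induction l with
  | nil => trivial
  | cons t ts ih =>
    exact ⟨(h t List.mem_cons_self).isPolynomial,
      ih fun u hu => h u (List.mem_cons_of_mem _ hu)⟩

section Eval

variable [AddCommGroup K] (ops : ∀ i, (Fin (ar i) → K) → K)

theorem eval_rename {m : ℕ} (f : Fin n → Fin m) (t : PTerm K ι ar n) (b : Fin m → K) :
    (t.rename f).eval ops b = t.eval ops (b ∘ f) := by
  induction t with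
  | var j => rfl
  | const c => rfl
  | add s t ihs iht => simp [rename, eval, ihs, iht]
  | op i ts ih => simp [rename, eval, ih]

theorem eval_rename_castAdd (t : PTerm K ι ar n) (x y : Fin n → K) :
    (t.rename (Fin.castAdd n)).eval ops (Fin.append x y) = t.eval ops x := by
  rw [eval_rename]
  exact congrArg _ (funext (Fin.append_left x y))

theorem eval_rename_natAdd (t : PTerm K ι ar n) (x y : Fin n → K) :
    (t.rename (Fin.natAdd n)).eval ops (Fin.append x y) = t.eval ops y := by
  rw [eval_rename]
  exact congrArg _ (funext (Fin.append_right x y))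

theorem eval_listSum (l : List (PTerm K ι ar n)) (b : Fin n → K) :
    (listSum l).eval ops b = (l.map fun t => t.eval ops b).sum := by
  induction l with
  | nil => rfl
  | cons t ts ih => simp [listSum, eval, ih]

theorem eval_eq_of_occ_univ_eq_zero {t : PTerm K ι ar n} (h : t.occ univ = 0)
    (a a' : Fin n → K) : t.eval ops a = t.eval ops a' := by
  induction t with
  | var j => simp [occ] at h
  | const c => rfl
  | add s t ihs iht =>
    rw [occ, Nat.max_eq_zero_iff] at h
    simp only [eval, ihs h.1, iht h.2]
  | op i ts ih =>
    simp only [occ, sum_eq_zero_iff, mem_univ, true_implies] at h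
    simp only [eval, fun j => ih j (h j)]

theorem degree_le_occ {P : PTerm K ι ar n} (hP : P.IsPolynomial) (V : Finset (Fin n)) :
    P.degree ops V ≤ P.occ V :=
  Nat.sInf_le ⟨P, hP, fun _ => rfl, le_rfl⟩

theorem exists_isPolynomial_occ_le_degree {F : PTerm K ι ar n} {V : Finset (Fin n)}
    (h : F.degree ops V ≠ 0) :
    ∃ P : PTerm K ι ar n, P.IsPolynomial ∧ (∀ a, P.eval ops a = F.eval ops a) ∧
      P.occ V ≤ F.degree ops V := by
  rw [degree] at h ⊢
  exact Nat.sInf_mem (Nat.nonempty_of_pos_sInf (Nat.pos_of_ne_zero h))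

end Eval

section OpExpansion

/-- The summand of the expansion of `op i ts` at `x + y` that takes, in argument `j`, either
`ts j` at `x` (`none`) or the `s`-th summand `g j s` of `ts j (x + y) - ts j x` (`some s`). -/
def opChoice (i : ι) (ts : Fin (ar i) → PTerm K ι ar n) {σ : Fin (ar i) → Type}
    (g : ∀ j, σ j → PTerm K ι ar (n + n)) (r : ∀ j, Option (σ j)) :
    PTerm K ι ar (n + n) :=
  .op i fun j => (r j).elim ((ts j).rename (Fin.castAdd n)) (g j)

variable {i : ι} {ts : Fin (ar i) → PTerm K ι ar n} {σ : Fin (ar i) → Type}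
  {g : ∀ j, σ j → PTerm K ι ar (n + n)}

theorem isMonomial_opChoice (hts : ∀ j, (ts j).IsMonomial) (hg : ∀ j s, (g j s).IsMonomial)
    (r : ∀ j, Option (σ j)) : (opChoice i ts g r).IsMonomial := by
  intro j
  beta_reduce
  cases r j with
  | none => exact (hts j).rename _
  | some s => exact hg j s

theorem occ_opChoice_lt
    (hg : ∀ j s, (g j s).occ (univ.image (Fin.castAdd n)) < (ts j).occ univ)
    {r : ∀ j, Option (σ j)} (hr : r ≠ fun _ => none) :
    (opChoice i ts g r).occ (univ.image (Fin.castAdd n)) < (op i ts).occ univ := by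
  obtain ⟨j₀, s₀, hj₀⟩ : ∃ j s, r j = some s := by
    by_contra! h
    exact hr (funext fun j => Option.eq_none_iff_forall_ne_some.mpr (h j))
  refine sum_lt_sum (fun j _ => ?_) ⟨j₀, mem_univ _, ?_⟩
  · beta_reduce
    cases r j with
    | none => exact (occ_rename_castAdd _).le
    | some s => exact (hg j s).le
  · simp only [hj₀, Option.elim_some]
    exact hg j₀ s₀

variable [AddCommGroup K] {ops : ∀ i, (Fin (ar i) → K) → K}

theorem eval_opChoice_none (x y : Fin n → K) :
    (opChoice i ts g fun _ => none).eval ops (Fin.append x y) = (op i ts).eval ops x := by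
  simp only [opChoice, eval, Option.elim_none, eval_rename_castAdd]

theorem eval_op_add_eq_sum_opChoice (hpoly : IsPolyring ops) [∀ j, Fintype (σ j)]
    (hts : ∀ j x y, (ts j).eval ops (x + y) =
      (ts j).eval ops x + ∑ s, (g j s).eval ops (Fin.append x y)) (x y : Fin n → K) :
    (op i ts).eval ops (x + y) =
      ∑ r : ∀ j, Option (σ j), (opChoice i ts g r).eval ops (Fin.append x y) := by
  have hexpand : ∀ j, (ts j).eval ops (x + y) =
      ∑ o : Option (σ j),
        (o.elim ((ts j).rename (Fin.castAdd n)) (g j)).eval ops (Fin.append x y) := by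
    intro j
    simp only [Fintype.sum_option, Option.elim_none, Option.elim_some, eval_rename_castAdd, hts]
  simp only [eval, hexpand, opChoice]
  exact hpoly.map_sum i _

theorem exists_eval_opChoice_eq_eval_right
    (hg : ∀ j, (ts j).occ univ ≠ 0 →
      ∃ s, ∀ x y : Fin n → K, (g j s).eval ops (Fin.append x y) = (ts j).eval ops y)
    (h : (op i ts).occ univ ≠ 0) :
    ∃ r ≠ (fun _ => none), ∀ x y : Fin n → K,
      (opChoice i ts g r).eval ops (Fin.append x y) = (op i ts).eval ops y := by
  classical
  choose s hs using hg
  obtain ⟨j₀, hj₀⟩ : ∃ j, (ts j).occ univ ≠ 0 := by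
    by_contra! h'
    exact h (sum_eq_zero fun j _ => h' j)
  refine ⟨fun j => if hj : (ts j).occ univ = 0 then none else some (s j hj),
    fun hr => by simpa [hj₀] using congrFun hr j₀, fun x y => ?_⟩
  simp only [opChoice, eval]
  congr 1
  funext j
  by_cases hj : (ts j).occ univ = 0
  · simp only [hj, dite_true, Option.elim_none, eval_rename_castAdd]
    exact eval_eq_of_occ_univ_eq_zero ops hj x y
  · simp only [hj, dite_false, Option.elim_some, hs]

end OpExpansion

section Expansion

variable [AddCommGroup K] {ops : ∀ i, (Fin (ar i) → K) → K}

theorem IsMonomial.exists_eval_add_eq_add_sum (hpoly : IsPolyring ops) {M : PTerm K ι ar n}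
    (hM : M.IsMonomial) :
    ∃ (σ : Type) (_ : Fintype σ) (g : σ → PTerm K ι ar (n + n)),
      (∀ s, (g s).IsMonomial ∧ (g s).occ (univ.image (Fin.castAdd n)) < M.occ univ) ∧
      (∀ x y, M.eval ops (x + y) = M.eval ops x + ∑ s, (g s).eval ops (Fin.append x y)) ∧
      (M.occ univ ≠ 0 →
        ∃ s₀, ∀ x y, (g s₀).eval ops (Fin.append x y) = M.eval ops y) := by
  induction M with
  | var j =>
    refine ⟨Unit, inferInstance, fun _ => (var j).rename (Fin.natAdd n),
      fun _ => ⟨trivial, ?_⟩, fun x y => ?_, fun _ => ⟨(), eval_rename_natAdd ops _⟩⟩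
    · simp only [occ_rename_natAdd, occ, mem_univ, if_true, zero_lt_one]
    · simp only [eval_rename_natAdd, Finset.univ_unique, sum_singleton]
      rfl
  | const c => exact ⟨Empty, inferInstance, Empty.elim, (·.elim), fun _ _ => by simp [eval],
      fun h => absurd rfl h⟩
  | add s t => exact hM.elim
  | op i ts ih =>
    classical
    choose σ _ g hg hts hy using fun j => ih j (hM j)
    refine ⟨{r : ∀ j, Option (σ j) // r ≠ fun _ => none}, inferInstance,
      fun r => opChoice i ts g r,
      fun r => ⟨isMonomial_opChoice hM (fun j s => (hg j s).1) r,
        occ_opChoice_lt (fun j s => (hg j s).2) r.2⟩,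
      fun x y => ?_, fun h => ?_⟩
    · rw [eval_op_add_eq_sum_opChoice hpoly hts, Fintype.sum_eq_add_sum_subtype_ne _ fun _ => none,
        eval_opChoice_none]
    · obtain ⟨r, hr, hry⟩ := exists_eval_opChoice_eq_eval_right hy h
      exact ⟨⟨r, hr⟩, hry⟩

theorem IsMonomial.exists_isPolynomial_eval_add_sub (hpoly : IsPolyring ops)
    {M : PTerm K ι ar n} (hM : M.IsMonomial) {d : ℕ} (hd : 0 < d) (hMd : M.occ univ ≤ d) :
    ∃ G : PTerm K ι ar (n + n), G.IsPolynomial ∧ G.occ (univ.image (Fin.castAdd n)) < d ∧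
      ∀ x y, G.eval ops (Fin.append x y) = M.eval ops (x + y) - M.eval ops x - M.eval ops y := by
  by_cases hM₀ : M.occ univ = 0
  · refine ⟨.const (-M.eval ops 0), trivial, hd, fun x y => ?_⟩
    simp only [eval, eval_eq_of_occ_univ_eq_zero ops hM₀ _ 0]
    abel
  classical
  obtain ⟨σ, _, g, hg, hM_add, hy⟩ := hM.exists_eval_add_eq_add_sum hpoly
  obtain ⟨s₀, hs₀⟩ := hy hM₀
  refine ⟨listSum (univ.toList.map fun s : {s // s ≠ s₀} => g s),
    isPolynomial_listSum (by simp [hg]), occ_listSum_lt hd fun t ht => ?_, fun x y => ?_⟩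
  · simp only [List.mem_map, mem_toList, mem_univ, true_and] at ht
    obtain ⟨s, rfl⟩ := ht
    exact (hg s).2.trans_le hMd
  · rw [eval_listSum, List.map_map, sum_map_toList, hM_add,
      Fintype.sum_eq_add_sum_subtype_ne _ s₀, hs₀]
    simp only [Function.comp_apply]
    abel

theorem IsPolynomial.exists_isPolynomial_eval_add_sub (hpoly : IsPolyring ops)
    {P : PTerm K ι ar n} (hP : P.IsPolynomial) {d : ℕ} (hd : 0 < d) (hPd : P.occ univ ≤ d) :
    ∃ G : PTerm K ι ar (n + n), G.IsPolynomial ∧ G.occ (univ.image (Fin.castAdd n)) < d ∧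
      ∀ x y, G.eval ops (Fin.append x y) = P.eval ops (x + y) - P.eval ops x - P.eval ops y := by
  induction P with
  | add s t ihs iht =>
    obtain ⟨hsd, htd⟩ := max_le_iff.mp hPd
    obtain ⟨Gs, hGs, hGsd, hGs_eval⟩ := ihs hP.1 hsd
    obtain ⟨Gt, hGt, hGtd, hGt_eval⟩ := iht hP.2 htd
    refine ⟨.add Gs Gt, ⟨hGs, hGt⟩, max_lt hGsd hGtd, fun x y => ?_⟩
    simp only [eval, hGs_eval, hGt_eval]
    abel
  | var j => exact IsMonomial.exists_isPolynomial_eval_add_sub hpoly hP hd hPd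
  | const c => exact IsMonomial.exists_isPolynomial_eval_add_sub hpoly hP hd hPd
  | op i ts => exact IsMonomial.exists_isPolynomial_eval_add_sub hpoly hP hd hPd

end Expansion

end PTerm

/-- In a polyring, every term of nonzero degree is "almost an endomorphism":
`F(x⃗+y⃗) = F(x⃗) + F(y⃗) + G(x⃗,y⃗)` for some term `G` in `2n` variables whose
degree w.r.t. the first `n` variables is smaller than the degree of `F`. -/
theorem stmt_15 (K ι : Type) [AddCommGroup K] (ar : ι → ℕ)
    (ops : ∀ i, (Fin (ar i) → K) → K) (hpoly : IsPolyring ops)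
    (n : ℕ) (F : PTerm K ι ar n)
    (hdeg : F.degree ops Finset.univ ≠ 0) :
    ∃ G : PTerm K ι ar (n + n),
      G.degree ops (Finset.univ.image (Fin.castAdd n)) < F.degree ops Finset.univ ∧
      ∀ x y : Fin n → K,
        F.eval ops (x + y) = F.eval ops x + F.eval ops y + G.eval ops (Fin.append x y) := by
  obtain ⟨P, hP, hPF, hPd⟩ := PTerm.exists_isPolynomial_occ_le_degree ops hdeg
  obtain ⟨G, hG, hGd, hG_eval⟩ :=
    hP.exists_isPolynomial_eval_add_sub hpoly (Nat.pos_of_ne_zero hdeg) hPd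
  refine ⟨G, (PTerm.degree_le_occ ops hG _).trans_lt hGd, fun x y => ?_⟩
  rw [hG_eval, hPF, hPF, hPF]
  abel
end

section
/- (Key Lemma) Let K be a polyring, F a term in n variables of degree m, and a⃗₀,…,a⃗_m ∈ Kⁿ. If F(b⃗) = 0 for every b⃗ in FS(a⃗ᵢ)_{i≤m} (the set of all sums Σ_{i∈S} a⃗ᵢ over nonempty S ⊆ {0,…,m}, with coordinatewise addition), then F(0⃗) = 0. -/
variable {K ι : Type} {ar : ι → ℕ} {n : ℕ}

/-!
Say that `f : M → G` has degree at most `d` when all its `(d+1)`-fold forward differences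
vanish. Additive maps have degree at most `1`, and a map additive in each of its arguments adds
degrees: by multilinearity, a difference of `Φ (f₁, …, f_k)` expands into a sum of terms in each
of which some `fⱼ` is replaced by its difference. Over a polyring every term is equivalent to a
polynomial, so a term of degree `m` induces a function of degree at most `m`. The
`(m+1)`-fold difference of that function with steps `a₀, …, a_m`, taken at `0⃗`, is
`∑_S (-1)^|S| F(∑_{i ∈ S} aᵢ)`, which reduces to `F(0⃗)` when `F` vanishes on `FS(aᵢ)`.
-/

open fwdDiff

section FwdDiffDegree

variable {M G : Type*} [AddCommMonoid M] [AddCommGroup G]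

def FwdDiffDegreeLE : ℕ → (M → G) → Prop
  | 0, f => ∀ h, Δ_[h] f = 0
  | d + 1, f => ∀ h, FwdDiffDegreeLE d (Δ_[h] f)

theorem fwdDiffDegreeLE_const (d : ℕ) (c : G) : FwdDiffDegreeLE d (fun _ : M => c) := by
  induction d generalizing c with
  | zero => exact fun h => fwdDiff_const h c
  | succ d ih => exact fun h => fwdDiff_const h c ▸ ih 0

namespace FwdDiffDegreeLE

variable {d e : ℕ} {f g : M → G}

theorem succ (hf : FwdDiffDegreeLE d f) : FwdDiffDegreeLE (d + 1) f := by
  induction d generalizing f with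
  | zero => exact fun h => hf h ▸ fwdDiffDegreeLE_const 0 0
  | succ d ih => exact fun h => ih (hf h)

theorem mono (hf : FwdDiffDegreeLE d f) (hde : d ≤ e) : FwdDiffDegreeLE e f := by
  induction e, hde using Nat.le_induction with
  | base => exact hf
  | succ e _ ih => exact ih.succ

theorem fwdDiff (hf : FwdDiffDegreeLE d f) (h : M) : FwdDiffDegreeLE d (Δ_[h] f) :=
  hf.succ h

theorem add (hf : FwdDiffDegreeLE d f) (hg : FwdDiffDegreeLE d g) :
    FwdDiffDegreeLE d (f + g) := by
  induction d generalizing f g with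
  | zero => exact fun h => by rw [fwdDiff_add, hf h, hg h, add_zero]
  | succ d ih => exact fun h => fwdDiff_add h f g ▸ ih (hf h) (hg h)

theorem sum {α : Type*} {T : Finset α} {F : α → M → G}
    (hF : ∀ s ∈ T, FwdDiffDegreeLE d (F s)) : FwdDiffDegreeLE d (∑ s ∈ T, F s) :=
  Finset.sum_induction F (FwdDiffDegreeLE d) (fun _ _ => add) (fwdDiffDegreeLE_const d 0) hF

end FwdDiffDegreeLE

theorem fwdDiffDegreeLE_one_addMonoidHom (φ : M →+ G) : FwdDiffDegreeLE 1 φ := by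
  intro h
  have hφ : Δ_[h] φ = fun _ => φ h := funext fun x => by simp [fwdDiff]
  exact hφ ▸ fwdDiffDegreeLE_const 0 (φ h)

theorem sum_powerset_insert_neg_one_pow_smul {α : Type*} [DecidableEq α] (v : α → M)
    (f : M → G) {t : α} {T : Finset α} (ht : t ∉ T) (x : M) :
    ∑ S ∈ (insert t T).powerset, (-1 : ℤ) ^ S.card • f (x + ∑ i ∈ S, v i) =
      -∑ S ∈ T.powerset, (-1 : ℤ) ^ S.card • Δ_[v t] f (x + ∑ i ∈ S, v i) := by
  rw [Finset.sum_powerset_insert ht, ← Finset.sum_add_distrib, ← Finset.sum_neg_distrib]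
  refine Finset.sum_congr rfl fun S hS => ?_
  have htS : t ∉ S := fun htS => ht (Finset.mem_powerset.mp hS htS)
  rw [Finset.card_insert_of_notMem htS, Finset.sum_insert htS, pow_succ, mul_neg_one, neg_smul,
    fwdDiff, smul_sub, add_left_comm, add_comm (v t)]
  abel

theorem FwdDiffDegreeLE.sum_powerset_neg_one_pow_smul_eq_zero {α : Type*} [DecidableEq α]
    (v : α → M) {d : ℕ} {f : M → G} (hf : FwdDiffDegreeLE d f) {T : Finset α}
    (hT : d < T.card) (x : M) :
    ∑ S ∈ T.powerset, (-1 : ℤ) ^ S.card • f (x + ∑ i ∈ S, v i) = 0 := by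
  induction T using Finset.induction_on generalizing d f with
  | empty => simp at hT
  | @insert t T ht ih =>
    rw [sum_powerset_insert_neg_one_pow_smul v f ht, neg_eq_zero]
    cases d with
    | zero => simp [hf (v t)]
    | succ d => exact ih (hf (v t)) (by rw [Finset.card_insert_of_notMem ht] at hT; omega)

end FwdDiffDegree

section Multilinear

variable {M : Type*} [AddCommMonoid M] {R : Type*} [Semiring R] {ι' : Type*} [Fintype ι']
  [DecidableEq ι'] {G : ι' → Type*} [∀ j, AddCommGroup (G j)] [∀ j, Module R (G j)]
  {H : Type*} [AddCommGroup H] [Module R H]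

theorem fwdDiff_multilinearMap_comp (Φ : MultilinearMap R G H) (f : ∀ j, M → G j) (h : M) :
    Δ_[h] (fun x => Φ fun j => f j x) =
      ∑ s ∈ (Finset.univ : Finset (Finset ι')).erase ∅,
        fun x => Φ (s.piecewise (fun j => Δ_[h] (f j) x) fun j => f j x) := by
  funext x
  have hshift : (fun j => f j (x + h)) = (fun j => Δ_[h] (f j) x) + fun j => f j x :=
    funext fun j => (sub_add_cancel _ _).symm
  rw [Finset.sum_apply, fwdDiff, hshift, Φ.map_add_univ,
    ← Finset.add_sum_erase _ _ (Finset.mem_univ ∅), Finset.piecewise_empty, add_sub_cancel_left]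

theorem MultilinearMap.fwdDiffDegreeLE_comp (Φ : MultilinearMap R G H) {d : ι' → ℕ}
    {f : ∀ j, M → G j} (hf : ∀ j, FwdDiffDegreeLE (d j) (f j)) :
    FwdDiffDegreeLE (∑ j, d j) (fun x => Φ fun j => f j x) := by
  have hvanish : ∀ (f : ∀ j, M → G j) (h : M) (s : Finset ι'), ∀ j₀ ∈ s, Δ_[h] (f j₀) = 0 →
      (fun x => Φ (s.piecewise (fun j => Δ_[h] (f j) x) fun j => f j x)) = 0 :=
    fun f h s j₀ hj₀ h0 => funext fun x =>
      Φ.map_coord_zero j₀ (by rw [Finset.piecewise_eq_of_mem _ _ _ hj₀, h0, Pi.zero_apply])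
  induction hD : ∑ j, d j generalizing d f with
  | zero =>
    intro h
    rw [fwdDiff_multilinearMap_comp]
    refine Finset.sum_eq_zero fun s hs => ?_
    obtain ⟨j₀, hj₀⟩ := Finset.nonempty_iff_ne_empty.mpr (Finset.ne_of_mem_erase hs)
    have hd : d j₀ = 0 := (Finset.sum_eq_zero_iff.mp hD) j₀ (Finset.mem_univ _)
    exact hvanish f h s j₀ hj₀ ((hd ▸ hf j₀ : FwdDiffDegreeLE 0 (f j₀)) h)
  | succ D ih =>
    intro h
    rw [fwdDiff_multilinearMap_comp]
    refine FwdDiffDegreeLE.sum fun s hs => ?_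
    obtain ⟨j₀, hj₀⟩ := Finset.nonempty_iff_ne_empty.mpr (Finset.ne_of_mem_erase hs)
    cases hd : d j₀ with
    | zero =>
      rw [hvanish f h s j₀ hj₀ ((hd ▸ hf j₀ : FwdDiffDegreeLE 0 (f j₀)) h)]
      exact fwdDiffDegreeLE_const D 0
    | succ e =>
      refine ih (d := Function.update d j₀ e)
        (f := fun j x => s.piecewise (fun j => Δ_[h] (f j) x) (fun j => f j x) j) (fun j => ?_) ?_
      · rcases eq_or_ne j j₀ with rfl | hj
        · simpa [Finset.piecewise_eq_of_mem _ _ _ hj₀, hd] using (hd ▸ hf j : _) h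
        · rw [Function.update_of_ne hj]
          by_cases hjs : j ∈ s
          · simpa [Finset.piecewise_eq_of_mem _ _ _ hjs] using (hf j).fwdDiff h
          · simpa [Finset.piecewise_eq_of_notMem _ _ _ hjs] using hf j
      · rw [Finset.sum_eq_add_sum_sdiff_singleton_of_mem (Finset.mem_univ j₀), hd] at hD
        rw [Finset.sum_update_of_mem (Finset.mem_univ j₀)]
        omega

end Multilinear

section PTerm

theorem PTerm.IsMonomial.isPolynomial_s16 {t : PTerm K ι ar n} (ht : t.IsMonomial) :
    t.IsPolynomial := by
  cases t with
  | add => exact ht.elim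
  | _ => exact ht

variable [AddCommGroup K] {ops : ∀ i, (Fin (ar i) → K) → K}

def IsPolyring.multilinearMap (hpoly : IsPolyring ops) (i : ι) :
    MultilinearMap ℕ (fun _ : Fin (ar i) => K) K where
  toFun := ops i
  map_update_add' m j x y := by convert hpoly i j m x y
  map_update_smul' m j c x := by
    let φ : K →+ K := AddMonoidHom.mk' (fun y => ops i (Function.update m j y)) fun y z => by
      convert hpoly i j m y z
    exact map_nsmul φ c x

def PTerm.listSum_s16 : List (PTerm K ι ar n) → PTerm K ι ar n
  | [] => .const 0
  | t :: L => .add t (PTerm.listSum_s16 L)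

theorem PTerm.isPolynomial_listSum_s16 {L : List (PTerm K ι ar n)} (hL : ∀ t ∈ L, t.IsMonomial) :
    (PTerm.listSum_s16 L).IsPolynomial := by
  induction L with
  | nil => trivial
  | cons t L ih =>
    exact ⟨(hL t List.mem_cons_self).isPolynomial_s16, ih fun u hu => hL u (List.mem_cons_of_mem t hu)⟩

theorem PTerm.eval_listSum_s16 (L : List (PTerm K ι ar n)) (a : Fin n → K) :
    (PTerm.listSum_s16 L).eval ops a = (L.map (·.eval ops a)).sum := by
  induction L with
  | nil => rfl
  | cons t L ih => exact congrArg (t.eval ops a + ·) ih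

theorem PTerm.exists_monomials_sum_eq_eval (hpoly : IsPolyring ops) (F : PTerm K ι ar n) :
    ∃ L : List (PTerm K ι ar n), (∀ t ∈ L, t.IsMonomial) ∧
      ∀ a, (L.map (·.eval ops a)).sum = F.eval ops a := by
  induction F with
  | var j => exact ⟨[.var j], by simp [PTerm.IsMonomial], fun a => by simp⟩
  | const c => exact ⟨[.const c], by simp [PTerm.IsMonomial], fun a => by simp⟩
  | add s t ihs iht =>
    obtain ⟨L₁, hL₁, e₁⟩ := ihs
    obtain ⟨L₂, hL₂, e₂⟩ := iht
    refine ⟨L₁ ++ L₂, fun u hu => (List.mem_append.mp hu).elim (hL₁ u) (hL₂ u), fun a => ?_⟩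
    rw [List.map_append, List.sum_append, e₁, e₂]
    rfl
  | op i ts ih =>
    choose L hL e using ih
    let mono : (∀ j, Fin (L j).length) → PTerm K ι ar n := fun r => .op i fun j => (L j)[(r j).1]
    refine ⟨(Finset.univ.toList).map mono, ?_, fun a => ?_⟩
    · simp only [List.mem_map, Finset.mem_toList]
      rintro _ ⟨r, -, rfl⟩ j
      exact hL j _ (List.getElem_mem _)
    · have hsum : ∀ j, ∑ l : Fin (L j).length, (L j)[l.1].eval ops a = (ts j).eval ops a :=
        fun j => (Fin.sum_univ_fun_getElem (L j) (·.eval ops a)).trans (e j a)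
      have hexpand := (hpoly.multilinearMap i).map_sum fun j (l : Fin (L j).length) =>
        (L j)[l.1].eval ops a
      rw [funext hsum] at hexpand
      rw [List.map_map, Finset.sum_map_toList]
      exact hexpand.symm

theorem PTerm.exists_isPolynomial_eval_eq (hpoly : IsPolyring ops) (F : PTerm K ι ar n) :
    ∃ P : PTerm K ι ar n, P.IsPolynomial ∧ ∀ a, P.eval ops a = F.eval ops a := by
  obtain ⟨L, hL, e⟩ := F.exists_monomials_sum_eq_eval hpoly
  exact ⟨PTerm.listSum_s16 L, PTerm.isPolynomial_listSum_s16 hL,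
    fun a => (PTerm.eval_listSum_s16 L a).trans (e a)⟩

theorem PTerm.exists_isPolynomial_occ_le_degree_s16 (hpoly : IsPolyring ops) (F : PTerm K ι ar n)
    (V : Finset (Fin n)) : ∃ P : PTerm K ι ar n, P.IsPolynomial ∧
      (∀ a, P.eval ops a = F.eval ops a) ∧ P.occ V ≤ F.degree ops V := by
  obtain ⟨P, hP, e⟩ := F.exists_isPolynomial_eval_eq hpoly
  exact Nat.sInf_mem (s := {d | ∃ P : PTerm K ι ar n, P.IsPolynomial ∧
    (∀ a, P.eval ops a = F.eval ops a) ∧ P.occ V ≤ d}) ⟨P.occ V, P, hP, e, le_rfl⟩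

theorem PTerm.IsMonomial.fwdDiffDegreeLE_eval (hpoly : IsPolyring ops) {t : PTerm K ι ar n}
    (ht : t.IsMonomial) : FwdDiffDegreeLE (t.occ Finset.univ) (t.eval ops) := by
  induction t with
  | var j =>
    simp only [PTerm.occ, Finset.mem_univ, if_true]
    exact fwdDiffDegreeLE_one_addMonoidHom (Pi.evalAddMonoidHom (fun _ : Fin n => K) j)
  | const c => exact fwdDiffDegreeLE_const 0 c
  | add => exact ht.elim
  | op i ts ih =>
    exact (hpoly.multilinearMap i).fwdDiffDegreeLE_comp fun j => ih j (ht j)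

theorem PTerm.IsPolynomial.fwdDiffDegreeLE_eval (hpoly : IsPolyring ops) {P : PTerm K ι ar n}
    (hP : P.IsPolynomial) : FwdDiffDegreeLE (P.occ Finset.univ) (P.eval ops) := by
  induction P with
  | add s t ihs iht =>
    exact ((ihs hP.1).mono (le_max_left _ _)).add ((iht hP.2).mono (le_max_right _ _))
  | _ => exact PTerm.IsMonomial.fwdDiffDegreeLE_eval hpoly hP

end PTerm

/-- The Key Lemma: if `F` is a term of degree `m` over a polyring and `F`
vanishes on all nonempty subset sums of `m + 1` vectors `a⃗₀, …, a⃗_m ∈ Kⁿ`,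
then `F(0⃗) = 0`. -/
theorem stmt_16 (K ι : Type) [AddCommGroup K] (ar : ι → ℕ)
    (ops : ∀ i, (Fin (ar i) → K) → K) (hpoly : IsPolyring ops)
    (n m : ℕ) (F : PTerm K ι ar n) (hdeg : F.degree ops Finset.univ = m)
    (a : Fin (m + 1) → Fin n → K)
    (h : ∀ S : Finset (Fin (m + 1)), S.Nonempty → F.eval ops (∑ i ∈ S, a i) = 0) :
    F.eval ops 0 = 0 := by
  obtain ⟨P, hP, hPF, hocc⟩ := F.exists_isPolynomial_occ_le_degree_s16 hpoly Finset.univ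
  have hPdeg : FwdDiffDegreeLE m (P.eval ops) := (hP.fwdDiffDegreeLE_eval hpoly).mono (hdeg ▸ hocc)
  have halt := hPdeg.sum_powerset_neg_one_pow_smul_eq_zero a (T := Finset.univ) (by simp) 0
  rw [Finset.sum_eq_single_of_mem ∅ (Finset.empty_mem_powerset _) fun S _ hS => by
    rw [zero_add, hPF, h S (Finset.nonempty_iff_ne_empty.mpr hS), smul_zero]] at halt
  simpa [hPF] using halt
end
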